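/- Let c ∈ ℝ^K with not all entries equal, α ∈ ℝ^K, and let B satisfy min_k c_k < B < max_k c_k. Then there exists a unique t* ∈ ℝ such that ⟨softmax(α + t* c), c⟩ = B. -/

import Mathlib

noncomputable def softmax {K : ℕ} (a : Fin K → ℝ) (k : Fin K) : ℝ :=
  Real.exp (a k) / ∑ l, Real.exp (a l)

/-!
The mean `φ(t)` of `c` under the weights `exp (α k + t * c k)` has derivative equal to the
variance of `c` under these weights, which is positive as `c` is not constant; so `φ` is
strictly increasing. As `t → ±∞` the weights concentrate on the indices where `c` is maximal,
resp. minimal, so `φ` tends to `max c` and `min c`, and the intermediate value theorem gives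
a solution of `φ(t) = B`.
-/

open Filter Finset Real Topology

lemma Finset.isGreatest_range_univ_sup' {ι α : Type*} [Fintype ι] [LinearOrder α]
    (h : (univ : Finset ι).Nonempty) (f : ι → α) :
    IsGreatest (Set.range f) (univ.sup' h f) := by
  obtain ⟨i, -, hi⟩ := exists_mem_eq_sup' h f
  exact ⟨⟨i, hi.symm⟩, by rintro _ ⟨j, rfl⟩; exact le_sup' f (mem_univ j)⟩

lemma Finset.isLeast_range_univ_inf' {ι α : Type*} [Fintype ι] [LinearOrder α]
    (h : (univ : Finset ι).Nonempty) (f : ι → α) :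
    IsLeast (Set.range f) (univ.inf' h f) :=
  isGreatest_range_univ_sup' (α := αᵒᵈ) h f

section TiltedMean

variable {ι : Type*} [Fintype ι]

noncomputable def tiltedMean (α c : ι → ℝ) (t : ℝ) : ℝ :=
  (∑ k, exp (α k + t * c k) * c k) / ∑ k, exp (α k + t * c k)

lemma tiltedMean_neg (α c : ι → ℝ) (t : ℝ) :
    tiltedMean α (-c) t = -tiltedMean α c (-t) := by
  simp only [tiltedMean, Pi.neg_apply, mul_neg, neg_mul, sum_neg_distrib, neg_div]

lemma tiltedMean_eq_shift (α c : ι → ℝ) (t M : ℝ) :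
    tiltedMean α c t =
      (∑ k, exp (α k + t * (c k - M)) * c k) / ∑ k, exp (α k + t * (c k - M)) := by
  have hshift (k : ι) : exp (α k + t * (c k - M)) = exp (α k + t * c k) * exp (-(t * M)) := by
    rw [← exp_add]; ring_nf
  simp only [tiltedMean, hshift, mul_right_comm _ (exp _), ← sum_mul]
  rw [mul_div_mul_right _ _ (exp_pos _).ne']

/-- After dividing every weight by `exp (t * M)`, the weights with `c k < M` tend to `0` and
the others are constant, so the mean tends to `M`. -/
lemma tendsto_tiltedMean_atTop (α c : ι → ℝ) {M : ℝ} (hM : IsGreatest (Set.range c) M) :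
    Tendsto (tiltedMean α c) atTop (𝓝 M) := by
  obtain ⟨⟨k₀, hk₀⟩, hle⟩ := hM
  set L : ι → ℝ := fun k => if c k = M then exp (α k) else 0
  have hweight (k : ι) : Tendsto (fun t => exp (α k + t * (c k - M))) atTop (𝓝 (L k)) := by
    by_cases hk : c k = M
    · simp [L, hk]
    · have hlt : c k - M < 0 := sub_neg.mpr ((hle ⟨k, rfl⟩).lt_of_ne hk)
      rw [show L k = 0 from if_neg hk]
      exact tendsto_exp_atBot.comp
        (tendsto_atBot_add_const_left _ _ (tendsto_id.atTop_mul_const_of_neg hlt))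
  have hL_pos : 0 < ∑ k, L k :=
    sum_pos' (fun k _ => by positivity) ⟨k₀, mem_univ _, by simp [L, hk₀, exp_pos]⟩
  have hL_mul (k : ι) : L k * c k = L k * M := by
    by_cases hk : c k = M <;> simp [L, hk]
  have hlim : (∑ k, L k * c k) / ∑ k, L k = M := by
    rw [sum_congr rfl fun k _ => hL_mul k, ← sum_mul, mul_div_cancel_left₀ M hL_pos.ne']
  rw [← hlim]
  refine Tendsto.congr (fun t => (tiltedMean_eq_shift α c t M).symm) ?_
  exact (tendsto_finsetSum _ fun k _ => (hweight k).mul_const _).div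
    (tendsto_finsetSum _ fun k _ => hweight k) hL_pos.ne'

lemma tendsto_tiltedMean_atBot (α c : ι → ℝ) {m : ℝ} (hm : IsLeast (Set.range c) m) :
    Tendsto (tiltedMean α c) atBot (𝓝 m) := by
  obtain ⟨⟨k₀, hk₀⟩, hle⟩ := hm
  have hneg : IsGreatest (Set.range (-c)) (-m) :=
    ⟨⟨k₀, by simp [hk₀]⟩, by rintro _ ⟨k, rfl⟩; simpa using hle ⟨k, rfl⟩⟩
  have := ((tendsto_tiltedMean_atTop α (-c) hneg).comp tendsto_neg_atBot_atTop).neg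
  simpa [Function.comp_def, tiltedMean_neg] using this

variable [Nonempty ι]

lemma hasDerivAt_tiltedMean (α c : ι → ℝ) (t : ℝ) :
    HasDerivAt (tiltedMean α c)
      ((∑ k, exp (α k + t * c k) * (c k - tiltedMean α c t) ^ 2) / ∑ k, exp (α k + t * c k)) t := by
  set w : ι → ℝ := fun k => exp (α k + t * c k)
  have hS : 0 < ∑ k, w k := sum_pos (fun k _ => exp_pos _) univ_nonempty
  have hw (k : ι) : HasDerivAt (fun s => exp (α k + s * c k)) (w k * c k) t := by
    simpa using (((hasDerivAt_id t).mul_const (c k)).const_add (α k)).exp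
  have hvar : ∑ k, w k * (c k - tiltedMean α c t) ^ 2 =
      ∑ k, w k * c k * c k - 2 * tiltedMean α c t * ∑ k, w k * c k
        + tiltedMean α c t ^ 2 * ∑ k, w k := by
    simp only [mul_sum, ← sum_sub_distrib, ← sum_add_distrib]
    exact sum_congr rfl fun k _ => by ring
  have hN : ∑ k, w k * c k = tiltedMean α c t * ∑ k, w k :=
    (div_mul_cancel₀ _ hS.ne').symm
  rw [hvar]
  refine ((HasDerivAt.fun_sum fun k _ => (hw k).mul_const (c k)).div
    (HasDerivAt.fun_sum fun k _ => hw k) hS.ne').congr_deriv ?_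
  rw [hN]
  field_simp
  ring

lemma strictMono_tiltedMean (α : ι → ℝ) {c : ι → ℝ} (hc : ∃ k l, c k ≠ c l) :
    StrictMono (tiltedMean α c) := by
  refine strictMono_of_deriv_pos fun t => ?_
  rw [(hasDerivAt_tiltedMean α c t).deriv]
  obtain ⟨k, hk⟩ : ∃ k, c k ≠ tiltedMean α c t := by
    obtain ⟨k, l, hkl⟩ := hc
    by_contra! h
    exact hkl ((h k).trans (h l).symm)
  refine div_pos (sum_pos' (fun k _ => by positivity) ⟨k, mem_univ _, ?_⟩)
    (sum_pos (fun k _ => exp_pos _) univ_nonempty)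
  have := sub_ne_zero.mpr hk
  positivity

lemma continuous_tiltedMean (α c : ι → ℝ) : Continuous (tiltedMean α c) :=
  continuous_iff_continuousAt.2 fun t => (hasDerivAt_tiltedMean α c t).continuousAt

end TiltedMean

lemma sum_softmax_mul_eq_tiltedMean {K : ℕ} (α c : Fin K → ℝ) (t : ℝ) :
    ∑ k, softmax (fun k => α k + t * c k) k * c k = tiltedMean α c t := by
  simp only [softmax, tiltedMean, div_mul_eq_mul_div, ← sum_div]

/-- If the entries of `c` are not all equal and `min_k c_k < B < max_k c_k`, then there is
a unique `t*` with `⟨softmax (α + t* c), c⟩ = B`. -/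
theorem stmt5 {K : ℕ} (α c : Fin K → ℝ) (hc : ∃ k l, c k ≠ c l) (B : ℝ)
    (hlo : Finset.univ.inf' (Finset.univ_nonempty_iff.mpr ⟨hc.choose⟩) c < B)
    (hhi : B < Finset.univ.sup' (Finset.univ_nonempty_iff.mpr ⟨hc.choose⟩) c) :
    ∃! t : ℝ, ∑ k, softmax (fun k => α k + t * c k) k * c k = B := by
  have : Nonempty (Fin K) := ⟨hc.choose⟩
  simp only [sum_softmax_mul_eq_tiltedMean]
  obtain ⟨t₁, ht₁⟩ := ((tendsto_tiltedMean_atBot α c (isLeast_range_univ_inf' _ c)).eventually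
    (eventually_lt_nhds hlo)).exists
  obtain ⟨t₂, ht₂⟩ := ((tendsto_tiltedMean_atTop α c (isGreatest_range_univ_sup' _ c)).eventually
    (eventually_gt_nhds hhi)).exists
  obtain ⟨t, ht⟩ := mem_range_of_exists_le_of_exists_ge (continuous_tiltedMean α c)
    ⟨t₁, ht₁.le⟩ ⟨t₂, ht₂.le⟩
  exact ⟨t, ht, fun s hs => (strictMono_tiltedMean α hc).injective (hs.trans ht.symm)⟩
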